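/- arXiv:0811.3370 — 3 statements merged into one kernel-verified Lean document; each statement's English description precedes it below -/
import Mathlib

section
/- Any two proper involutions in Diffeo are conjugate: if τ₁ and τ₂ are C^∞ diffeomorphisms of ℝ with τ₁∘τ₁ = id, τ₂∘τ₂ = id, τ₁ ≠ id and τ₂ ≠ id, then there exists a C^∞ diffeomorphism h of ℝ with τ₁ = h⁻¹ ∘ τ₂ ∘ h. -/
/-!
A proper involution `τ` of `ℝ` is continuous and injective, hence strictly monotone or strictly
antitone, and it is not monotone since a monotone involution of a linear order is the identity.
So `h x = x - τ x` is strictly increasing with `h' = 1 - τ' ≥ 1`, hence a diffeomorphism of `ℝ`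
by the inverse function theorem, and `h (τ x) = τ x - x = -h x`. Thus every proper involution is
smoothly conjugate to `x ↦ -x`, and any two are conjugate to each other.
-/

/-- `f` is a C^∞ diffeomorphism of ℝ: a bijection such that both `f` and its
inverse are infinitely differentiable. -/
def IsDiffeo (f : ℝ → ℝ) : Prop :=
  Function.Bijective f ∧ ContDiff ℝ (⊤ : ℕ∞) f ∧ ContDiff ℝ (⊤ : ℕ∞) (Function.invFun f)

open Function Filter

namespace Function

section invFun

variable {α β γ : Type*} [Nonempty α] [Nonempty β]

theorem Bijective.invFun_invFun {f : α → β} (hf : Bijective f) : invFun (invFun f) = f :=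
  invFun_eq_of_injective_of_rightInverse (rightInverse_invFun hf.2).injective
    (leftInverse_invFun hf.1)

theorem Bijective.invFun_comp_rev {f : α → β} {g : β → γ} (hf : Bijective f)
    (hg : Bijective g) : invFun (g ∘ f) = invFun f ∘ invFun g :=
  invFun_eq_of_injective_of_rightInverse (hg.1.comp hf.1) fun z => by
    simp only [comp_apply, rightInverse_invFun hf.2 _, rightInverse_invFun hg.2 _]

end invFun

theorem Involutive.eq_id_of_monotone {α : Type*} [LinearOrder α] {τ : α → α}
    (hi : Involutive τ) (hm : Monotone τ) : τ = id := by
  funext x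
  rcases le_total (τ x) x with h | h
  · exact le_antisymm h ((hi x).symm.le.trans (hm h))
  · exact le_antisymm ((hm h).trans (hi x).le) h

theorem Involutive.strictAnti_of_continuous {α : Type*} [ConditionallyCompleteLinearOrder α]
    [TopologicalSpace α] [OrderTopology α] [DenselyOrdered α] {τ : α → α} (hi : Involutive τ)
    (hc : Continuous τ) (hn : τ ≠ id) : StrictAnti τ :=
  (hc.strictMono_of_inj hi.injective).resolve_left fun hm => hn (hi.eq_id_of_monotone hm.monotone)

end Function

namespace IsDiffeo

variable {f g : ℝ → ℝ}

theorem invFun (hf : IsDiffeo f) : IsDiffeo (invFun f) := by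
  obtain ⟨hb, hs, hs'⟩ := hf
  refine ⟨⟨(rightInverse_invFun hb.2).injective, invFun_surjective hb.1⟩, hs', ?_⟩
  rwa [hb.invFun_invFun]

theorem comp (hg : IsDiffeo g) (hf : IsDiffeo f) : IsDiffeo (g ∘ f) := by
  refine ⟨hg.1.comp hf.1, hg.2.1.comp hf.2.1, ?_⟩
  rw [hf.1.invFun_comp_rev hg.1]
  exact hf.2.2.comp hg.2.2

end IsDiffeo

theorem isDiffeo_of_strictMono {f : ℝ → ℝ} (hmono : StrictMono f) (hsurj : Surjective f)
    (hf : ContDiff ℝ (⊤ : ℕ∞) f) (hf' : ∀ x, deriv f x ≠ 0) : IsDiffeo f := by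
  let e := (hmono.orderIsoOfSurjective f hsurj).toHomeomorph
  have hinv : invFun f = e.symm :=
    invFun_eq_of_injective_of_rightInverse hmono.injective e.apply_symm_apply
  refine ⟨⟨hmono.injective, hsurj⟩, hf, hinv ▸ e.contDiff_symm_deriv hf' (fun x => ?_) hf⟩
  exact (hf.differentiable (by simp) x).hasDerivAt

def SmoothlyConjugate (τ σ : ℝ → ℝ) : Prop :=
  ∃ h : ℝ → ℝ, IsDiffeo h ∧ τ = invFun h ∘ σ ∘ h

namespace SmoothlyConjugate

variable {τ σ ρ : ℝ → ℝ}

theorem of_semiconj {h : ℝ → ℝ} (hh : IsDiffeo h) (hconj : Semiconj h τ σ) :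
    SmoothlyConjugate τ σ :=
  ⟨h, hh, funext fun x => by simp only [comp_apply, ← hconj x, leftInverse_invFun hh.1.1 _]⟩

theorem symm (hτσ : SmoothlyConjugate τ σ) : SmoothlyConjugate σ τ := by
  obtain ⟨h, hh, rfl⟩ := hτσ
  refine ⟨invFun h, hh.invFun, funext fun x => ?_⟩
  simp only [hh.1.invFun_invFun, comp_apply, rightInverse_invFun hh.1.2 _]

theorem trans (hτσ : SmoothlyConjugate τ σ) (hσρ : SmoothlyConjugate σ ρ) :
    SmoothlyConjugate τ ρ := by
  obtain ⟨h, hh, rfl⟩ := hτσ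
  obtain ⟨k, hk, rfl⟩ := hσρ
  exact ⟨k ∘ h, hk.comp hh, by rw [hh.1.invFun_comp_rev hk.1]; rfl⟩

end SmoothlyConjugate

theorem Continuous.surjective_id_sub_of_antitone {τ : ℝ → ℝ} (hc : Continuous τ)
    (ha : Antitone τ) : Surjective fun x => x - τ x := by
  refine (show Continuous fun x => x - τ x by fun_prop).surjective ?_ ?_
  · refine tendsto_atTop_mono' atTop ?_ (tendsto_atTop_add_const_right atTop (-τ 0) tendsto_id)
    filter_upwards [eventually_ge_atTop 0] with x hx
    linarith [ha hx, id_eq x]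
  · refine tendsto_atBot_mono' atBot ?_ (tendsto_atBot_add_const_right atBot (-τ 0) tendsto_id)
    filter_upwards [eventually_le_atBot 0] with x hx
    linarith [ha hx, id_eq x]

theorem smoothlyConjugate_neg_of_involutive {τ : ℝ → ℝ} (hτ : ContDiff ℝ (⊤ : ℕ∞) τ)
    (hi : Involutive τ) (hn : τ ≠ id) : SmoothlyConjugate τ Neg.neg := by
  have ha : StrictAnti τ := hi.strictAnti_of_continuous hτ.continuous hn
  have hderiv : ∀ x, deriv (fun x => x - τ x) x = 1 - deriv τ x := fun x =>
    ((hasDerivAt_id x).sub (hτ.differentiable (by simp) x).hasDerivAt).deriv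
  refine .of_semiconj (h := fun x => x - τ x) (isDiffeo_of_strictMono ?_ ?_ ?_ ?_) fun x => ?_
  · exact fun a b hab => by linarith [ha hab]
  · exact hτ.continuous.surjective_id_sub_of_antitone ha.antitone
  · exact contDiff_id.sub hτ
  · intro x
    rw [hderiv]
    linarith [ha.antitone.deriv_nonpos (x := x)]
  · simp only [hi x, neg_sub]

theorem proper_involutions_conjugate
    (τ₁ τ₂ : ℝ → ℝ) (hτ₁ : IsDiffeo τ₁) (hτ₂ : IsDiffeo τ₂)
    (hi₁ : τ₁ ∘ τ₁ = id) (hi₂ : τ₂ ∘ τ₂ = id)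
    (hn₁ : τ₁ ≠ id) (hn₂ : τ₂ ≠ id) :
    ∃ h : ℝ → ℝ, IsDiffeo h ∧ τ₁ = Function.invFun h ∘ τ₂ ∘ h :=
  (smoothlyConjugate_neg_of_involutive hτ₁.2.1 (congrFun hi₁) hn₁).trans
    (smoothlyConjugate_neg_of_involutive hτ₂.2.1 (congrFun hi₂) hn₂).symm
end

section
/- Let S be a formal power series over ℝ with zero constant term and linear coefficient −1, and let m ≥ 1. If S∘S ≡ X modulo X^(2m) (the coefficients of S∘S and X agree in all degrees < 2m), then S∘S ≡ X modulo X^(2m+1). -/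
/-!
Write `s_i` for the coefficients of `S`, `T = S ∘ S`, `n = 2m` and `c` for the coefficient
of `X^n` in `T`, so that `T ≡ X + c X^n` modulo `X^(n+1)`. Associativity of composition gives `S ∘ T = T ∘ S`.
Comparing coefficients of `X^n`: on the left `s_n + s_1 c = s_n - c`, on the right
`s_n + c s_1^n = s_n + c` because `n` is even. Hence `c = 0`.
-/

/-- Formal composition `A ∘ B` of power series over ℝ (intended for `B` with zero
constant term, in which case `coeff n (B ^ k) = 0` for `k > n` and the defining
sum is the full substitution of `B` into `A`). -/
noncomputable def PSComp (A B : PowerSeries ℝ) : PowerSeries ℝ :=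
  PowerSeries.mk fun n => ∑ k ∈ Finset.range (n + 1),
    PowerSeries.coeff k A * PowerSeries.coeff n (B ^ k)

open PowerSeries

theorem mul_pow_dvd_pow_succ_sub_pow_succ {R : Type*} [CommRing R] {a b d x : R}
    (hd : d ∣ b - a) (ha : x ∣ a) (hb : x ∣ b) (k : ℕ) :
    d * x ^ k ∣ b ^ (k + 1) - a ^ (k + 1) := by
  rw [← geom_sum₂_mul, mul_comm d]
  refine mul_dvd_mul (Finset.dvd_sum fun i hi => ?_) hd
  obtain ⟨j, rfl⟩ := Nat.exists_eq_add_of_le (Nat.lt_succ_iff.mp (Finset.mem_range.mp hi))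
  rw [show i + j + 1 - 1 - i = j by omega, pow_add]
  exact mul_dvd_mul (pow_dvd_pow_of_dvd hb i) (pow_dvd_pow_of_dvd ha _)

namespace PowerSeries

variable {R : Type*} [CommRing R]

theorem coeff_pow_eq_zero_of_lt {B : R⟦X⟧} (hB : constantCoeff B = 0) {j k : ℕ} (h : j < k) :
    coeff j (B ^ k) = 0 :=
  X_pow_dvd_iff.mp (pow_dvd_pow_of_dvd (X_dvd_iff.mpr hB) k) j h

theorem coeff_pow_self_of_constantCoeff_eq_zero {B : R⟦X⟧} (hB : constantCoeff B = 0) (n : ℕ) :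
    coeff n (B ^ n) = coeff 1 B ^ n := by
  obtain ⟨C, rfl⟩ := X_dvd_iff.mpr hB
  simp [mul_pow, coeff_X_pow_mul', coeff_succ_X_mul]

theorem coeff_pow_eq_coeff_X_pow {B : R⟦X⟧} {n k : ℕ} (hB : constantCoeff B = 0)
    (hBX : X ^ n ∣ B - X) (hk : 2 ≤ k) : coeff n (B ^ k) = coeff n (X ^ k : R⟦X⟧) := by
  obtain ⟨k, rfl⟩ : ∃ j, k = j + 1 := ⟨k - 1, by omega⟩
  have hdvd := mul_pow_dvd_pow_succ_sub_pow_succ hBX (dvd_refl X) (X_dvd_iff.mpr hB) k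
  rw [← pow_add] at hdvd
  exact sub_eq_zero.mp (by simpa using X_pow_dvd_iff.mp hdvd n (by omega))

end PowerSeries

theorem PSComp_eq_subst (A B : ℝ⟦X⟧) (hB : constantCoeff B = 0) : PSComp A B = A.subst B := by
  ext n
  rw [PSComp, coeff_mk, coeff_subst' (HasSubst.of_constantCoeff_zero' hB),
    finsum_eq_sum_of_support_subset (s := Finset.range (n + 1))]
  · simp only [smul_eq_mul]
  · refine Function.support_subset_iff'.mpr fun k hk => ?_
    simp [coeff_pow_eq_zero_of_lt hB (by simpa using hk : n < k)]

theorem constantCoeff_PSComp (A B : ℝ⟦X⟧) (hA : constantCoeff A = 0) :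
    constantCoeff (PSComp A B) = 0 := by
  rw [← coeff_zero_eq_constantCoeff_apply, PSComp, coeff_mk]
  simp [hA]

theorem PSComp_assoc (A B C : ℝ⟦X⟧) (hB : constantCoeff B = 0) (hC : constantCoeff C = 0) :
    PSComp (PSComp A B) C = PSComp A (PSComp B C) := by
  have hBC := constantCoeff_PSComp B C hB
  rw [PSComp_eq_subst _ _ hC, PSComp_eq_subst _ _ hB, PSComp_eq_subst _ _ hBC,
    PSComp_eq_subst _ _ hC, subst_comp_subst_apply (HasSubst.of_constantCoeff_zero' hB)
      (HasSubst.of_constantCoeff_zero' hC)]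

theorem coeff_PSComp_of_X_pow_dvd_sub_X_right (f T : ℝ⟦X⟧) {n : ℕ} (hn : 2 ≤ n)
    (hT : constantCoeff T = 0) (hTX : X ^ n ∣ T - X) :
    coeff n (PSComp f T) = coeff n f + coeff 1 f * coeff n T := by
  rw [PSComp, coeff_mk, Finset.sum_eq_add_of_mem 1 n (Finset.mem_range.mpr (by omega))
    (Finset.self_mem_range_succ n) (by omega)]
  · rw [pow_one, coeff_pow_eq_coeff_X_pow hT hTX hn, coeff_X_pow_self]
    ring
  · rintro k - ⟨hk1, hkn⟩
    obtain rfl | hk2 : k = 0 ∨ 2 ≤ k := by omega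
    · rw [pow_zero, coeff_one, if_neg (by omega), mul_zero]
    · rw [coeff_pow_eq_coeff_X_pow hT hTX hk2, coeff_X_pow, if_neg (Ne.symm hkn), mul_zero]

theorem coeff_PSComp_of_X_pow_dvd_sub_X_left (T g : ℝ⟦X⟧) {n : ℕ} (hn : 2 ≤ n)
    (hg : constantCoeff g = 0) (hTX : X ^ n ∣ T - X) :
    coeff n (PSComp T g) = coeff n g + coeff n T * coeff 1 g ^ n := by
  have hlow : ∀ k < n, coeff k T = coeff k X := fun k hk =>
    sub_eq_zero.mp (by simpa using X_pow_dvd_iff.mp hTX k hk)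
  rw [PSComp, coeff_mk, Finset.sum_eq_add_of_mem 1 n (Finset.mem_range.mpr (by omega))
    (Finset.self_mem_range_succ n) (by omega)]
  · rw [hlow 1 (by omega), coeff_X, if_pos rfl, one_mul, pow_one,
      coeff_pow_self_of_constantCoeff_eq_zero hg]
  · rintro k hk ⟨hk1, hkn⟩
    rw [hlow k (by have := Finset.mem_range.mp hk; omega), coeff_X, if_neg hk1, zero_mul]

theorem square_identity_mod_even_implies_mod_next_odd
    (S : PowerSeries ℝ)
    (h0 : PowerSeries.constantCoeff S = 0)
    (h1 : PowerSeries.coeff 1 S = -1)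
    (m : ℕ) (hm : 1 ≤ m)
    (hagree : ∀ k < 2 * m, PowerSeries.coeff k (PSComp S S) =
      PowerSeries.coeff k (PowerSeries.X : PowerSeries ℝ)) :
    ∀ k < 2 * m + 1, PowerSeries.coeff k (PSComp S S) =
      PowerSeries.coeff k (PowerSeries.X : PowerSeries ℝ) := by
  intro k hk
  obtain hk | rfl : k < 2 * m ∨ k = 2 * m := by omega
  · exact hagree k hk
  set T := PSComp S S
  have hTX : X ^ (2 * m) ∣ T - X :=
    X_pow_dvd_iff.mpr fun j hj => by rw [map_sub, hagree j hj, sub_self]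
  have hT0 : constantCoeff T = 0 := constantCoeff_PSComp S S h0
  have hcomm := congrArg (coeff (2 * m)) (PSComp_assoc S S S h0 h0)
  rw [coeff_PSComp_of_X_pow_dvd_sub_X_left T S (by omega) h0 hTX,
    coeff_PSComp_of_X_pow_dvd_sub_X_right S T (by omega) hT0 hTX, h1,
    (even_two_mul m).neg_one_pow] at hcomm
  rw [coeff_X, if_neg (by omega)]
  linarith
end

section
/- Let f and g₂ be orientation-reversing C^∞ diffeomorphisms of ℝ fixing 0 with f∘f = g₂∘g₂ and T_0 f = T_0 g₂ (equal n-th derivatives at 0 for all n ≥ 1). Define k : ℝ → ℝ by k(x) = x for x ≥ 0 and k(x) = g₂(f⁻¹(x)) for x < 0. Then k is an orientation-preserving C^∞ diffeomorphism of ℝ and f = k⁻¹ ∘ g₂ ∘ k. -/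
open Function Set
open scoped ContDiff

section TaylorComp

variable {𝕜 : Type*} [NontriviallyNormedField 𝕜]
  {E F G : Type*} [NormedAddCommGroup E] [NormedSpace 𝕜 E] [NormedAddCommGroup F]
  [NormedSpace 𝕜 F] [NormedAddCommGroup G] [NormedSpace 𝕜 G]
  {n : WithTop ℕ∞} {g₁ g₂ : F → G} {f : E → F} {x : E}

theorem iteratedFDeriv_comp_eq_of_iteratedFDeriv_eq (hg₁ : ContDiffAt 𝕜 n g₁ (f x))
    (hg₂ : ContDiffAt 𝕜 n g₂ (f x)) (hf : ContDiffAt 𝕜 n f x)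
    (h : ∀ m, iteratedFDeriv 𝕜 m g₁ (f x) = iteratedFDeriv 𝕜 m g₂ (f x))
    {i : ℕ} (hi : i ≤ n) :
    iteratedFDeriv 𝕜 i (g₁ ∘ f) x = iteratedFDeriv 𝕜 i (g₂ ∘ f) x := by
  rw [iteratedFDeriv_comp hg₁ hf hi, iteratedFDeriv_comp hg₂ hf hi]
  have hseries : ftaylorSeries 𝕜 g₁ (f x) = ftaylorSeries 𝕜 g₂ (f x) := funext h
  rw [hseries]

theorem iteratedDeriv_comp_eq_of_iteratedDeriv_eq {g₁ g₂ f : 𝕜 → 𝕜} {x : 𝕜}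
    (hg₁ : ContDiffAt 𝕜 n g₁ (f x)) (hg₂ : ContDiffAt 𝕜 n g₂ (f x)) (hf : ContDiffAt 𝕜 n f x)
    (h : ∀ m, iteratedDeriv m g₁ (f x) = iteratedDeriv m g₂ (f x)) {i : ℕ} (hi : i ≤ n) :
    iteratedDeriv i (g₁ ∘ f) x = iteratedDeriv i (g₂ ∘ f) x := by
  simp only [iteratedDeriv_eq_iteratedFDeriv]
  rw [iteratedFDeriv_comp_eq_of_iteratedFDeriv_eq hg₁ hg₂ hf (fun m => ?_) hi]
  simp only [iteratedFDeriv_eq_equiv_comp, comp_apply, h m]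

end TaylorComp

section Gluing

variable {E : Type*} [NormedAddCommGroup E] [NormedSpace ℝ E] {F G h : ℝ → E} {a : ℝ}

theorem hasDerivAt_of_eqOn_Iic_of_eqOn_Ici {d : E} (hG : HasDerivAt G d a)
    (hF : HasDerivAt F d a) (hG_eq : EqOn h G (Iic a)) (hF_eq : EqOn h F (Ici a)) :
    HasDerivAt h d a := by
  have := (hG.hasDerivWithinAt.congr_of_mem hG_eq self_mem_Iic).union
    (hF.hasDerivWithinAt.congr_of_mem hF_eq self_mem_Ici)
  rwa [Iic_union_Ici, hasDerivWithinAt_univ] at this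

section

variable (hF : Differentiable ℝ F) (hG : Differentiable ℝ G) (hd : deriv F a = deriv G a)
  (hG_eq : EqOn h G (Iic a)) (hF_eq : EqOn h F (Ici a))
include hF hG hd hG_eq hF_eq

theorem hasDerivAt_deriv_of_eqOn_Iic {x : ℝ} (hx : x ≤ a) : HasDerivAt h (deriv G x) x := by
  rcases hx.lt_or_eq with hx | hx
  · exact (hG x).hasDerivAt.congr_of_eventuallyEq (hG_eq.eventuallyEq_of_mem (Iic_mem_nhds hx))
  · rw [hx]
    exact hasDerivAt_of_eqOn_Iic_of_eqOn_Ici (hG a).hasDerivAt (hd ▸ (hF a).hasDerivAt) hG_eq hF_eq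

theorem hasDerivAt_deriv_of_eqOn_Ici {x : ℝ} (hx : a ≤ x) : HasDerivAt h (deriv F x) x := by
  rcases hx.lt_or_eq with hx | hx
  · exact (hF x).hasDerivAt.congr_of_eventuallyEq (hF_eq.eventuallyEq_of_mem (Ici_mem_nhds hx))
  · rw [← hx]
    exact hasDerivAt_of_eqOn_Iic_of_eqOn_Ici (hd ▸ (hG a).hasDerivAt) (hF a).hasDerivAt hG_eq hF_eq

theorem differentiable_of_eqOn_Iic_of_eqOn_Ici : Differentiable ℝ h := fun x =>
  (le_total x a).elim
    (fun hx => (hasDerivAt_deriv_of_eqOn_Iic hF hG hd hG_eq hF_eq hx).differentiableAt)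
    (fun hx => (hasDerivAt_deriv_of_eqOn_Ici hF hG hd hG_eq hF_eq hx).differentiableAt)

end

theorem contDiff_of_eqOn_Iic_of_eqOn_Ici (hF : ContDiff ℝ ∞ F) (hG : ContDiff ℝ ∞ G)
    (hFG : ∀ m, iteratedDeriv m F a = iteratedDeriv m G a)
    (hG_eq : EqOn h G (Iic a)) (hF_eq : EqOn h F (Ici a)) : ContDiff ℝ ∞ h := by
  refine contDiff_infty.2 fun n => ?_
  have hd : deriv F a = deriv G a := by simpa using hFG 1
  have hF' : Differentiable ℝ F := hF.differentiable (by simp)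
  have hG' : Differentiable ℝ G := hG.differentiable (by simp)
  induction n generalizing F G h with
  | zero =>
    exact contDiff_zero.2 (differentiable_of_eqOn_Iic_of_eqOn_Ici hF' hG' hd hG_eq hF_eq).continuous
  | succ n ih =>
    rw [Nat.cast_succ, contDiff_succ_iff_deriv]
    refine ⟨differentiable_of_eqOn_Iic_of_eqOn_Ici hF' hG' hd hG_eq hF_eq, by simp, ?_⟩
    have hF₁ := (contDiff_infty_iff_deriv.1 hF).2
    have hG₁ := (contDiff_infty_iff_deriv.1 hG).2
    have hFG₁ (m : ℕ) : iteratedDeriv m (deriv F) a = iteratedDeriv m (deriv G) a := by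
      simpa only [iteratedDeriv_succ'] using hFG (m + 1)
    exact ih hF₁ hG₁ hFG₁
      (fun x hx => (hasDerivAt_deriv_of_eqOn_Iic hF' hG' hd hG_eq hF_eq hx).deriv)
      (fun x hx => (hasDerivAt_deriv_of_eqOn_Ici hF' hG' hd hG_eq hF_eq hx).deriv)
      (by simpa using hFG₁ 1) (hF₁.differentiable (by simp)) (hG₁.differentiable (by simp))

end Gluing

theorem StrictAnti.invFun {α β : Type*} [LinearOrder α] [Preorder β] [Nonempty α] {f : α → β}
    (hf : StrictAnti f) (hs : Surjective f) : StrictAnti (invFun f) := fun a b hab =>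
  hf.lt_iff_gt.1 (by rwa [rightInverse_invFun hs a, rightInverse_invFun hs b])

noncomputable def conjugator (f g : ℝ → ℝ) (x : ℝ) : ℝ :=
  if 0 ≤ x then x else g (invFun f x)

namespace conjugator

variable {f g : ℝ → ℝ}

theorem eqOn_Ici : EqOn (conjugator f g) id (Ici 0) := fun _ hx => if_pos hx

theorem eqOn_Iic (hf : Injective f) (hf0 : f 0 = 0) (hg0 : g 0 = 0) :
    EqOn (conjugator f g) (g ∘ invFun f) (Iic 0) := by
  intro x hx
  rcases (mem_Iic.1 hx).lt_or_eq with hx | rfl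
  · exact if_neg hx.not_ge
  · have hu0 : invFun f 0 = 0 := by simpa [hf0] using leftInverse_invFun hf 0
    simp [conjugator, hu0, hg0]

theorem semiconj (hf : StrictAnti f) (hfb : Bijective f) (hf0 : f 0 = 0) (hg0 : g 0 = 0)
    (hsq : f ∘ f = g ∘ g) : Semiconj (conjugator f g) f g := by
  intro x
  rcases lt_or_ge x 0 with hx | hx
  · have hfx : 0 ≤ f x := hf0 ▸ (hf hx).le
    calc conjugator f g (f x) = f (f (invFun f x)) := by
          rw [eqOn_Ici hfx, id, rightInverse_invFun hfb.2 x]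
      _ = g (g (invFun f x)) := congrFun hsq _
      _ = g (conjugator f g x) := by rw [eqOn_Iic hfb.1 hf0 hg0 hx.le, comp_apply]
  · have hfx : f x ≤ 0 := hf0 ▸ hf.antitone hx
    rw [eqOn_Iic hfb.1 hf0 hg0 hfx, eqOn_Ici hx, comp_apply, leftInverse_invFun hfb.1, id]

theorem contDiff (hfb : Bijective f) (hf0 : f 0 = 0) (hfs : ContDiff ℝ ∞ f)
    (hus : ContDiff ℝ ∞ (invFun f)) (hgs : ContDiff ℝ ∞ g)
    (hT : ∀ n, iteratedDeriv n f 0 = iteratedDeriv n g 0) : ContDiff ℝ ∞ (conjugator f g) := by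
  have hu0 : invFun f 0 = 0 := by simpa [hf0] using leftInverse_invFun hfb.1 0
  have hg0 : g 0 = 0 := by simpa [hf0] using (hT 0).symm
  refine contDiff_of_eqOn_Iic_of_eqOn_Ici contDiff_id (hgs.comp hus) (fun m => ?_)
    (eqOn_Iic hfb.1 hf0 hg0) eqOn_Ici
  rw [← (rightInverse_invFun hfb.2).comp_eq_id]
  exact iteratedDeriv_comp_eq_of_iteratedDeriv_eq hfs.contDiffAt hgs.contDiffAt hus.contDiffAt
    (by rwa [hu0]) (by exact_mod_cast le_top)

variable (hf : StrictAnti f) (hfb : Bijective f) (hf0 : f 0 = 0) (hg : StrictAnti g) (hg0 : g 0 = 0)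
include hf hfb hf0 hg hg0

theorem strictMono : StrictMono (conjugator f g) := by
  refine StrictMonoOn.Iic_union_Ici (a := 0) (fun x hx y hy hxy => ?_) (fun x hx y hy hxy => ?_)
  · rw [eqOn_Iic hfb.1 hf0 hg0 hx, eqOn_Iic hfb.1 hf0 hg0 hy]
    exact hg.comp (hf.invFun hfb.2) hxy
  · rwa [eqOn_Ici hx, eqOn_Ici hy]

theorem leftInverse (hgb : Bijective g) : LeftInverse (conjugator g f) (conjugator f g) := by
  intro x
  rcases le_total x 0 with hx | hx
  · have hkx : conjugator f g x ≤ 0 := by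
      simpa [conjugator] using (strictMono hf hfb hf0 hg hg0).monotone hx
    rw [eqOn_Iic hgb.1 hg0 hf0 hkx, eqOn_Iic hfb.1 hf0 hg0 hx]
    simp [leftInverse_invFun hgb.1 _, rightInverse_invFun hfb.2 x]
  · rw [eqOn_Ici hx, id, eqOn_Ici hx, id]

end conjugator

theorem explicit_conjugator
    (f g₂ : ℝ → ℝ) (hf : IsDiffeo f) (hg₂ : IsDiffeo g₂)
    (hfa : StrictAnti f) (hg₂a : StrictAnti g₂)
    (hf0 : f 0 = 0) (hg₂0 : g₂ 0 = 0)
    (hsq : f ∘ f = g₂ ∘ g₂)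
    (hT : ∀ n : ℕ, 1 ≤ n → iteratedDeriv n f 0 = iteratedDeriv n g₂ 0)
    (k : ℝ → ℝ)
    (hk₁ : ∀ x : ℝ, 0 ≤ x → k x = x)
    (hk₂ : ∀ x : ℝ, x < 0 → k x = g₂ (Function.invFun f x)) :
    IsDiffeo k ∧ StrictMono k ∧ f = Function.invFun k ∘ g₂ ∘ k := by
  obtain ⟨hfb, hfs, hus⟩ := hf
  obtain ⟨hgb, hgs, hvs⟩ := hg₂
  obtain rfl : k = conjugator f g₂ := funext fun x => by
    by_cases hx : 0 ≤ x
    · rw [hk₁ x hx, conjugator, if_pos hx]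
    · rw [hk₂ x (not_le.1 hx), conjugator, if_neg hx]
  have hTaylor (n : ℕ) : iteratedDeriv n f 0 = iteratedDeriv n g₂ 0 := by
    rcases n.eq_zero_or_pos with rfl | hn
    · simp [hf0, hg₂0]
    · exact hT n hn
  have hmono := conjugator.strictMono hfa hfb hf0 hg₂a hg₂0
  have hleft := conjugator.leftInverse hfa hfb hf0 hg₂a hg₂0 hgb
  have hright := conjugator.leftInverse hg₂a hgb hg₂0 hfa hf0 hfb
  have hinv : invFun (conjugator f g₂) = conjugator g₂ f :=
    invFun_eq_of_injective_of_rightInverse hmono.injective hright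
  refine ⟨⟨⟨hmono.injective, hright.surjective⟩, conjugator.contDiff hfb hf0 hfs hus hgs hTaylor,
    hinv ▸ conjugator.contDiff hgb hg₂0 hgs hvs hfs fun n => (hTaylor n).symm⟩, hmono, ?_⟩
  rw [hinv, ← (conjugator.semiconj hfa hfb hf0 hg₂0 hsq).comp_eq, ← comp_assoc, hleft.comp_eq_id,
    id_comp]
end
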